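/- Let μ = {μ_t}_{t>0} be a factorizing family over [0,1]×L, and let ν = {ν_t}_{t>0} and ω = {ω_t}_{t>0} be families of probability measures on (𝒞_t,Σ_t) with ν_t ≪ μ_t and ω_t ≪ μ_t for all t>0, satisfying the exact factorization identities ν_{s+t} = (ν_s⊗ν_t)∘⊕_{s,t}^{-1} and ω_{s+t} = (ω_s⊗ω_t)∘⊕_{s,t}^{-1} for all s,t>0. Define the Hellinger affinity H(t) := ∫_{𝒞_t} √((dν_t/dμ_t)(Z) · (dω_t/dμ_t)(Z)) dμ_t(Z). Then H is multiplicative: H(s+t) = H(s)·H(t) for all s,t>0. -/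

import Mathlib

/-!
Cutting a closed set `Z ⊆ [0, s + t] × L` at time `s` and shifting the second half back gives a
measurable map `splitMap` with `splitMap (Z₁ ⊕ Z₂) = (Z₁, Z₂)` unless `Z₁` meets `{s} × L` or `Z₂`
meets `{0} × L`, events which are `μ_s ⊗ μ_t`-null by (ii). (Measurability uses that the Fell
topology over a locally compact second countable space has a countable subbasis of hit and miss
sets.) The Hellinger affinity is unchanged when the dominating measure `R` is replaced by any
`R' ≫ R`, is invariant under push-forward along a map with an a.e. measurable left inverse, and
is multiplicative on products. Since `μ_{s+t} ≪ (μ_s ⊗ μ_t) ∘ ⊕⁻¹` while `ν` and `ω`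
factorize exactly, the affinity at time `s + t` is that of the product measures.
-/

open MeasureTheory Set
open scoped ENNReal NNReal

namespace RandomSets

variable (L : Type) [TopologicalSpace L]

/-- The time strip `[0,t] × L` inside `ℝ × L`. -/
def strip (t : ℝ) : Set (ℝ × L) := Set.Icc (0:ℝ) t ×ˢ (Set.univ : Set L)

lemma isClosed_strip (t : ℝ) : IsClosed (strip L t) :=
  isClosed_Icc.prod isClosed_univ

/-- Closed subsets of `[0,t] × L`. -/
def Cl (t : ℝ) : Type := {F : Set (ℝ × L) // IsClosed F ∧ F ⊆ strip L t}

variable {L}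

lemma isClosed_fstImage (f g : ℝ → ℝ) (hg : Continuous g)
    (hgf : ∀ x, g (f x) = x) (hfg : ∀ x, f (g x) = x)
    {A : Set (ℝ × L)} (hA : IsClosed A) :
    IsClosed ((fun p : ℝ × L => (f p.1, p.2)) '' A) := by
  have h : (fun p : ℝ × L => (f p.1, p.2)) '' A
      = (fun p : ℝ × L => (g p.1, p.2)) ⁻¹' A := by
    ext p
    constructor
    · rintro ⟨q, hq, rfl⟩
      simpa [hgf] using hq
    · intro hp
      exact ⟨(g p.1, p.2), hp, by simp [hfg]⟩
  rw [h]
  exact hA.preimage (by fun_prop)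

variable (L)

/-- The Fell topology on `Cl L t`. -/
def fellTop (t : ℝ) : TopologicalSpace (Cl L t) :=
  TopologicalSpace.generateFrom
    ({S | ∃ U : Set (ℝ × L), IsOpen U ∧
        S = {F : Cl L t | (F.1 ∩ (U ∩ strip L t)).Nonempty}} ∪
     {S | ∃ K : Set (ℝ × L), IsCompact K ∧ K ⊆ strip L t ∧
        S = {F : Cl L t | F.1 ∩ K = ∅}})

instance (t : ℝ) : TopologicalSpace (Cl L t) := fellTop L t

/-- `Σ_t`, the Borel σ-field of the Fell topology. -/
instance (t : ℝ) : MeasurableSpace (Cl L t) := borel (Cl L t)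

variable {L}

/-- Concatenation: `Z₁ ⊕_{s,t} Z₂ = Z₁ ∪ (s + Z₂)` as a closed subset of `[0,s+t] × L`. -/
noncomputable def concat (s t : ℝ) (Z₁ : Cl L s) (Z₂ : Cl L t) : Cl L (s + t) :=
  ⟨(Z₁.1 ∪ (fun p : ℝ × L => (p.1 + s, p.2)) '' Z₂.1) ∩ strip L (s + t), by
    refine ⟨IsClosed.inter ?_ (isClosed_strip L _), Set.inter_subset_right⟩
    exact Z₁.2.1.union (isClosed_fstImage (· + s) (· - s) (by fun_prop)
      (fun x => by ring) (fun x => by ring) Z₂.2.1)⟩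

/-- Concatenation as a map on pairs. -/
noncomputable def concatMap (s t : ℝ) : Cl L s × Cl L t → Cl L (s + t) :=
  fun p => concat s t p.1 p.2

/-- A factorizing family of probability measures over `[0,1] × L` (Definition 2.2 (i)–(ii)). -/
def IsFactorizing (μ : (t : ℝ) → Measure (Cl L t)) : Prop :=
  (∀ t : ℝ, 0 < t → IsProbabilityMeasure (μ t)) ∧
  (∀ s t : ℝ, 0 < s → 0 < t →
    μ (s + t) ≪ Measure.map (concatMap s t) ((μ s).prod (μ t)) ∧
    Measure.map (concatMap s t) ((μ s).prod (μ t)) ≪ μ (s + t)) ∧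
  (∀ t : ℝ, 0 < t → ∀ r ∈ Set.Icc (0:ℝ) t,
    μ t {Z : Cl L t | ∃ ℓ : L, (r, ℓ) ∈ Z.1} = 0)

section RelCompactBasis

open TopologicalSpace

variable (X : Type*) [TopologicalSpace X] [SecondCountableTopology X]

def relCompactBasis : Set (Set X) :=
  {b ∈ countableBasis X | IsCompact (closure b)}

lemma countable_relCompactBasis : (relCompactBasis X).Countable :=
  (countable_countableBasis X).mono (sep_subset _ _)

variable {X}

lemma isOpen_of_mem_relCompactBasis {b : Set X} (hb : b ∈ relCompactBasis X) : IsOpen b :=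
  (isBasis_countableBasis X).isOpen hb.1

lemma exists_mem_relCompactBasis_closure_subset [LocallyCompactSpace X] [T2Space X]
    {U : Set X} (hU : IsOpen U) {x : X} (hx : x ∈ U) :
    ∃ b ∈ relCompactBasis X, x ∈ b ∧ closure b ⊆ U := by
  obtain ⟨K, hK, hxK, hKU⟩ := exists_compact_subset hU hx
  obtain ⟨b, hb, hxb, hbK⟩ :=
    (isBasis_countableBasis X).exists_subset_of_mem_open hxK isOpen_interior
  have hbK' : closure b ⊆ K := closure_minimal (hbK.trans interior_subset) hK.isClosed
  exact ⟨b, ⟨hb, hK.of_isClosed_subset isClosed_closure hbK'⟩, hxb, hbK'.trans hKU⟩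

lemma isCompact_closure_sUnion_of_subset_relCompactBasis {T : Set (Set X)} (hTf : T.Finite)
    (hT : T ⊆ relCompactBasis X) : IsCompact (closure (⋃₀ T)) := by
  rw [hTf.closure_sUnion]
  exact hTf.isCompact_biUnion fun b hb => (hT hb).2

lemma exists_finite_subset_relCompactBasis_cover [LocallyCompactSpace X] [T2Space X]
    {K U : Set X} (hK : IsCompact K) (hU : IsOpen U) (hKU : K ⊆ U) :
    ∃ T ⊆ relCompactBasis X, T.Finite ∧ K ⊆ ⋃₀ T ∧ closure (⋃₀ T) ⊆ U := by
  obtain ⟨T, hTsub, hTf, hKT⟩ := hK.elim_finite_subcover_image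
    (b := {b ∈ relCompactBasis X | closure b ⊆ U}) (c := id)
    (fun b hb => isOpen_of_mem_relCompactBasis hb.1) fun x hx => by
      obtain ⟨b, hb, hxb, hbU⟩ := exists_mem_relCompactBasis_closure_subset hU (hKU hx)
      exact mem_biUnion (x := b) ⟨hb, hbU⟩ hxb
  refine ⟨T, hTsub.trans (sep_subset _ _), hTf, by simpa [sUnion_eq_biUnion] using hKT, ?_⟩
  rw [hTf.closure_sUnion]
  exact iUnion₂_subset fun b hb => (hTsub hb).2

end RelCompactBasis

section Hellinger

variable {α β : Type*} [MeasurableSpace α] [MeasurableSpace β]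

noncomputable def hellingerAffinity (P Q R : Measure α) : ℝ≥0∞ :=
  ∫⁻ x, (P.rnDeriv R x * Q.rnDeriv R x) ^ (2⁻¹ : ℝ) ∂ R

lemma integral_sqrt_toReal_rnDeriv_mul (P Q R : Measure α) [SigmaFinite P] [SigmaFinite Q] :
    ∫ x, Real.sqrt ((P.rnDeriv R x).toReal * (Q.rnDeriv R x).toReal) ∂ R
      = (hellingerAffinity P Q R).toReal := by
  rw [hellingerAffinity, ← integral_toReal]
  · refine integral_congr_ae (ae_of_all _ fun x => ?_)
    dsimp only
    rw [← ENNReal.toReal_mul, Real.sqrt_eq_rpow, ← ENNReal.toReal_rpow, one_div]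
  · exact (((P.measurable_rnDeriv R).mul (Q.measurable_rnDeriv R)).pow_const _).aemeasurable
  · filter_upwards [P.rnDeriv_lt_top R, Q.rnDeriv_lt_top R] with x hP hQ
    exact ENNReal.rpow_lt_top_of_nonneg (by norm_num) (ENNReal.mul_ne_top hP.ne hQ.ne)

lemma hellingerAffinity_of_absolutelyContinuous {P Q R R' : Measure α} [SigmaFinite P]
    [SigmaFinite Q] [SigmaFinite R] [SigmaFinite R'] (hPR : P ≪ R) (hQR : Q ≪ R) (hRR' : R ≪ R') :
    hellingerAffinity P Q R' = hellingerAffinity P Q R := by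
  have hfactor : (fun x => (P.rnDeriv R' x * Q.rnDeriv R' x) ^ (2⁻¹ : ℝ))
      =ᵐ[R'] fun x => R.rnDeriv R' x * (P.rnDeriv R x * Q.rnDeriv R x) ^ (2⁻¹ : ℝ) := by
    filter_upwards [Measure.rnDeriv_mul_rnDeriv (κ := R') hPR,
      Measure.rnDeriv_mul_rnDeriv (κ := R') hQR] with x hP hQ
    simp only [Pi.mul_apply] at hP hQ
    rw [← hP, ← hQ, show ∀ a b c : ℝ≥0∞, a * c * (b * c) = a * b * (c * c) by intros; ring,
      ENNReal.mul_rpow_of_nonneg _ _ (by norm_num), ← sq, ← ENNReal.rpow_two,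
      ← ENNReal.rpow_mul, mul_inv_cancel₀ two_ne_zero, ENNReal.rpow_one, mul_comm]
  rw [hellingerAffinity, lintegral_congr_ae hfactor, lintegral_rnDeriv_mul hRR'
    (f := fun x => (P.rnDeriv R x * Q.rnDeriv R x) ^ (2⁻¹ : ℝ))
    (((P.measurable_rnDeriv R).mul (Q.measurable_rnDeriv R)).pow_const _).aemeasurable]
  rfl

lemma rnDeriv_map_ae_eq_comp_of_ae_leftInverse {φ : α → β} {ψ : β → α} (hφ : Measurable φ)
    (hψ : Measurable ψ) {P R : Measure α} [IsFiniteMeasure P] [IsFiniteMeasure R] (hPR : P ≪ R)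
    (hinv : ∀ᵐ x ∂ R, ψ (φ x) = x) :
    (P.map φ).rnDeriv (R.map φ) =ᵐ[R.map φ] P.rnDeriv R ∘ ψ := by
  have hdensity : (R.map φ).withDensity (P.rnDeriv R ∘ ψ) = P.map φ := by
    ext A hA
    rw [withDensity_apply _ hA, setLIntegral_map hA ((P.measurable_rnDeriv R).comp hψ) hφ,
      Measure.map_apply hφ hA, ← Measure.setLIntegral_rnDeriv hPR]
    refine lintegral_congr_ae (ae_restrict_of_ae ?_)
    filter_upwards [hinv] with x hx
    simp [hx]
  rw [← hdensity]
  exact Measure.rnDeriv_withDensity _ ((P.measurable_rnDeriv R).comp hψ)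

lemma hellingerAffinity_map_of_ae_leftInverse {φ : α → β} {ψ : β → α} {P Q R : Measure α}
    [IsFiniteMeasure P] [IsFiniteMeasure Q] [IsFiniteMeasure R] (hφ : AEMeasurable φ R)
    (hψ : Measurable ψ) (hPR : P ≪ R) (hQR : Q ≪ R) (hinv : ∀ᵐ x ∂ R, ψ (φ x) = x) :
    hellingerAffinity (P.map φ) (Q.map φ) (R.map φ) = hellingerAffinity P Q R := by
  have hinv' : ∀ᵐ x ∂ R, ψ (hφ.mk φ x) = x := by
    filter_upwards [hinv, hφ.ae_eq_mk] with x hx hφx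
    rwa [← hφx]
  rw [Measure.map_congr hφ.ae_eq_mk, Measure.map_congr (hPR.ae_le hφ.ae_eq_mk),
    Measure.map_congr (hQR.ae_le hφ.ae_eq_mk)]
  have hφ' := hφ.measurable_mk
  calc hellingerAffinity (P.map (hφ.mk φ)) (Q.map (hφ.mk φ)) (R.map (hφ.mk φ))
      = ∫⁻ y, (P.rnDeriv R (ψ y) * Q.rnDeriv R (ψ y)) ^ (2⁻¹ : ℝ) ∂ R.map (hφ.mk φ) := by
        refine lintegral_congr_ae ?_
        filter_upwards [rnDeriv_map_ae_eq_comp_of_ae_leftInverse hφ' hψ hPR hinv',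
          rnDeriv_map_ae_eq_comp_of_ae_leftInverse hφ' hψ hQR hinv'] with y hP hQ
        rw [hP, hQ, Function.comp_apply, Function.comp_apply]
    _ = hellingerAffinity P Q R := by
        rw [lintegral_map (by fun_prop) hφ']
        refine lintegral_congr_ae ?_
        filter_upwards [hinv'] with x hx
        rw [hx]

lemma rnDeriv_prod_ae_eq {P R : Measure α} {Q S : Measure β} [SigmaFinite P] [SigmaFinite R]
    [SigmaFinite Q] [SigmaFinite S] (hPR : P ≪ R) (hQS : Q ≪ S) :
    (P.prod Q).rnDeriv (R.prod S) =ᵐ[R.prod S] fun z => P.rnDeriv R z.1 * Q.rnDeriv S z.2 := by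
  conv_lhs => rw [← Measure.withDensity_rnDeriv_eq P R hPR,
    ← Measure.withDensity_rnDeriv_eq Q S hQS,
    prod_withDensity (P.measurable_rnDeriv R) (Q.measurable_rnDeriv S)]
  exact Measure.rnDeriv_withDensity _ (by fun_prop)

lemma hellingerAffinity_prod {P P' R : Measure α} {Q Q' S : Measure β} [SigmaFinite P]
    [SigmaFinite P'] [SigmaFinite R] [SigmaFinite Q] [SigmaFinite Q'] [SigmaFinite S]
    (hPR : P ≪ R) (hP'R : P' ≪ R) (hQS : Q ≪ S) (hQ'S : Q' ≪ S) :
    hellingerAffinity (P.prod Q) (P'.prod Q') (R.prod S)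
      = hellingerAffinity P P' R * hellingerAffinity Q Q' S := by
  have hfactor : (fun z => ((P.prod Q).rnDeriv (R.prod S) z
        * (P'.prod Q').rnDeriv (R.prod S) z) ^ (2⁻¹ : ℝ))
      =ᵐ[R.prod S] fun z => (P.rnDeriv R z.1 * P'.rnDeriv R z.1) ^ (2⁻¹ : ℝ)
        * (Q.rnDeriv S z.2 * Q'.rnDeriv S z.2) ^ (2⁻¹ : ℝ) := by
    filter_upwards [rnDeriv_prod_ae_eq hPR hQS, rnDeriv_prod_ae_eq hP'R hQ'S] with z h h'
    rw [h, h', ← ENNReal.mul_rpow_of_nonneg _ _ (by norm_num), mul_mul_mul_comm]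
  rw [hellingerAffinity, lintegral_congr_ae hfactor, lintegral_prod_mul
    (f := fun x => (P.rnDeriv R x * P'.rnDeriv R x) ^ (2⁻¹ : ℝ))
    (g := fun y => (Q.rnDeriv S y * Q'.rnDeriv S y) ^ (2⁻¹ : ℝ)) (by fun_prop) (by fun_prop)]
  rfl

end Hellinger

def slice (a t : ℝ) {u : ℝ} (Z : Cl L u) : Cl L t :=
  ⟨(fun p : ℝ × L => (p.1 + a, p.2)) ⁻¹' Z.1 ∩ strip L t,
    (Z.2.1.preimage (by fun_prop)).inter (isClosed_strip L t), inter_subset_right⟩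

def splitMap (s t : ℝ) (Z : Cl L (s + t)) : Cl L s × Cl L t :=
  (slice 0 s Z, slice s t Z)

lemma slice_zero_concat {s t : ℝ} (ht : 0 ≤ t) (Z₁ : Cl L s) {Z₂ : Cl L t}
    (hZ₂ : ∀ ℓ : L, ((0 : ℝ), ℓ) ∉ Z₂.1) : slice 0 s (concat s t Z₁ Z₂) = Z₁ := by
  refine Subtype.ext (Set.ext fun ⟨r, ℓ⟩ => ?_)
  simp only [slice, concat, add_zero, mem_inter_iff, mem_preimage, mem_union, mem_image]
  constructor
  · rintro ⟨⟨h | ⟨⟨q, ℓ'⟩, hq, hqr⟩, -⟩, ⟨⟨-, hrs⟩, -⟩⟩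
    · exact h
    · obtain ⟨rfl, rfl⟩ := Prod.ext_iff.1 hqr
      obtain ⟨⟨hq0, -⟩, -⟩ := Z₂.2.2 hq
      obtain rfl : q = 0 := by simp only at hrs; linarith
      exact absurd hq (hZ₂ ℓ')
  · intro h
    obtain ⟨⟨hr0, hrs⟩, -⟩ := Z₁.2.2 h
    exact ⟨⟨Or.inl h, ⟨hr0, by linarith⟩, trivial⟩, Z₁.2.2 h⟩

lemma slice_concat {s t : ℝ} (hs : 0 ≤ s) {Z₁ : Cl L s} (Z₂ : Cl L t)
    (hZ₁ : ∀ ℓ : L, (s, ℓ) ∉ Z₁.1) : slice s t (concat s t Z₁ Z₂) = Z₂ := by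
  refine Subtype.ext (Set.ext fun ⟨r, ℓ⟩ => ?_)
  simp only [slice, concat, mem_inter_iff, mem_preimage, mem_union, mem_image]
  constructor
  · rintro ⟨⟨h | ⟨⟨q, ℓ'⟩, hq, hqr⟩, -⟩, ⟨⟨hr0, -⟩, -⟩⟩
    · obtain ⟨⟨-, hrs⟩, -⟩ := Z₁.2.2 h
      obtain rfl : r = 0 := by simp only at hrs; linarith
      exact absurd (by simpa using h) (hZ₁ ℓ)
    · obtain ⟨hqr, rfl⟩ := Prod.ext_iff.1 hqr
      obtain rfl : q = r := by simp only at hqr; linarith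
      exact hq
  · intro h
    obtain ⟨⟨hr0, hrt⟩, -⟩ := Z₂.2.2 h
    exact ⟨⟨Or.inr ⟨(r, ℓ), h, rfl⟩, ⟨by linarith, by linarith⟩, trivial⟩, Z₂.2.2 h⟩

lemma ae_splitMap_concatMap {s t : ℝ} (hs : 0 ≤ s) (ht : 0 ≤ t) (μs : Measure (Cl L s))
    (μt : Measure (Cl L t)) [SFinite μt]
    (hμs : μs {Z : Cl L s | ∃ ℓ : L, (s, ℓ) ∈ Z.1} = 0)
    (hμt : μt {Z : Cl L t | ∃ ℓ : L, ((0 : ℝ), ℓ) ∈ Z.1} = 0) :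
    ∀ᵐ p ∂(μs.prod μt), splitMap s t (concatMap s t p) = p := by
  filter_upwards [Measure.quasiMeasurePreserving_fst.ae (measure_eq_zero_iff_ae_notMem.1 hμs),
    Measure.quasiMeasurePreserving_snd.ae (measure_eq_zero_iff_ae_notMem.1 hμt)]
    with ⟨Z₁, Z₂⟩ hZ₁ hZ₂
  simp only [not_exists] at hZ₁ hZ₂
  exact Prod.ext (slice_zero_concat ht Z₁ hZ₂) (slice_concat hs Z₂ hZ₁)

section FellBorel

instance (u : ℝ) : BorelSpace (Cl L u) := ⟨rfl⟩

lemma isOpen_hit (u : ℝ) {U : Set (ℝ × L)} (hU : IsOpen U) :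
    IsOpen {F : Cl L u | (F.1 ∩ (U ∩ strip L u)).Nonempty} :=
  TopologicalSpace.isOpen_generateFrom_of_mem (Or.inl ⟨U, hU, rfl⟩)

lemma isOpen_miss (u : ℝ) {K : Set (ℝ × L)} (hK : IsCompact K) (hKs : K ⊆ strip L u) :
    IsOpen {F : Cl L u | F.1 ∩ K = ∅} :=
  TopologicalSpace.isOpen_generateFrom_of_mem (Or.inr ⟨K, hK, hKs, rfl⟩)

variable [SecondCountableTopology L]

variable (L) in
def fellSubbasis (u : ℝ) : Set (Set (Cl L u)) :=
  ((fun b => {F : Cl L u | (F.1 ∩ (b ∩ strip L u)).Nonempty}) '' relCompactBasis (ℝ × L)) ∪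
  ((fun T => {F : Cl L u | F.1 ∩ (closure (⋃₀ T) ∩ strip L u) = ∅}) ''
    {T | T.Finite ∧ T ⊆ relCompactBasis (ℝ × L)})

lemma countable_fellSubbasis (u : ℝ) : (fellSubbasis L u).Countable :=
  ((countable_relCompactBasis _).image _).union
    ((countable_ofPred_finite_subset (countable_relCompactBasis _)).image _)

variable [LocallyCompactSpace L] [T2Space L]

lemma hit_eq_biUnion (u : ℝ) {U : Set (ℝ × L)} (hU : IsOpen U) :
    {F : Cl L u | (F.1 ∩ (U ∩ strip L u)).Nonempty}
      = ⋃ b ∈ {b ∈ relCompactBasis (ℝ × L) | b ⊆ U},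
          {F : Cl L u | (F.1 ∩ (b ∩ strip L u)).Nonempty} := by
  ext F
  simp only [mem_ofPred_eq, mem_iUnion, exists_prop]
  constructor
  · rintro ⟨x, hxF, hxU, hxs⟩
    obtain ⟨b, hb, hxb, hbU⟩ := exists_mem_relCompactBasis_closure_subset hU hxU
    exact ⟨b, ⟨hb, subset_closure.trans hbU⟩, x, hxF, hxb, hxs⟩
  · rintro ⟨b, ⟨-, hbU⟩, x, hxF, hxb, hxs⟩
    exact ⟨x, hxF, hbU hxb, hxs⟩

lemma miss_eq_biUnion (u : ℝ) {K : Set (ℝ × L)} (hK : IsCompact K) (hKs : K ⊆ strip L u) :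
    {F : Cl L u | F.1 ∩ K = ∅}
      = ⋃ T ∈ {T | (T.Finite ∧ T ⊆ relCompactBasis (ℝ × L)) ∧ K ⊆ ⋃₀ T},
          {F : Cl L u | F.1 ∩ (closure (⋃₀ T) ∩ strip L u) = ∅} := by
  ext F
  simp only [mem_ofPred_eq, mem_iUnion, exists_prop, eq_empty_iff_forall_notMem]
  constructor
  · intro hFK
    obtain ⟨T, hTB, hTf, hKT, hTF⟩ := exists_finite_subset_relCompactBasis_cover hK
      F.2.1.isOpen_compl fun x hxK hxF => hFK x ⟨hxF, hxK⟩
    exact ⟨T, ⟨⟨hTf, hTB⟩, hKT⟩, fun x ⟨hxF, hxT, _⟩ => hTF hxT hxF⟩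
  · rintro ⟨T, ⟨-, hKT⟩, hF⟩ x ⟨hxF, hxK⟩
    exact hF x ⟨hxF, subset_closure (hKT hxK), hKs hxK⟩

lemma fellTop_eq_generateFrom_fellSubbasis (u : ℝ) :
    fellTop L u = TopologicalSpace.generateFrom (fellSubbasis L u) := by
  refine le_antisymm (le_generateFrom ?_) (le_generateFrom ?_)
  · rintro S (⟨b, hb, rfl⟩ | ⟨T, ⟨hTf, hTB⟩, rfl⟩)
    · exact isOpen_hit u (isOpen_of_mem_relCompactBasis hb)
    · exact isOpen_miss u ((isCompact_closure_sUnion_of_subset_relCompactBasis hTf hTB).inter_right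
        (isClosed_strip L u)) inter_subset_right
  · rintro S (⟨U, hU, rfl⟩ | ⟨K, hK, hKs, rfl⟩)
    · rw [hit_eq_biUnion u hU]
      exact @isOpen_biUnion _ _ (TopologicalSpace.generateFrom _) _ _ fun b hb =>
        TopologicalSpace.isOpen_generateFrom_of_mem (Or.inl ⟨b, hb.1, rfl⟩)
    · rw [miss_eq_biUnion u hK hKs]
      exact @isOpen_biUnion _ _ (TopologicalSpace.generateFrom _) _ _ fun T hT =>
        TopologicalSpace.isOpen_generateFrom_of_mem (Or.inr ⟨T, hT.1, rfl⟩)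

instance (u : ℝ) : SecondCountableTopology (Cl L u) :=
  (TopologicalSpace.isTopologicalBasis_of_subbasis
    (fellTop_eq_generateFrom_fellSubbasis u)).secondCountableTopology
    ((countable_ofPred_finite_subset (countable_fellSubbasis u)).image _)

lemma measurable_of_measurableSet_preimage_hit_miss {β : Type*} [MeasurableSpace β] {u : ℝ}
    {f : β → Cl L u}
    (hhit : ∀ U, IsOpen U → MeasurableSet (f ⁻¹' {F | (F.1 ∩ (U ∩ strip L u)).Nonempty}))
    (hmiss : ∀ K, IsCompact K → K ⊆ strip L u → MeasurableSet (f ⁻¹' {F | F.1 ∩ K = ∅})) :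
    Measurable f := by
  have hgen : @Measurable β (Cl L u) _ (MeasurableSpace.generateFrom (fellSubbasis L u)) f := by
    refine measurable_generateFrom ?_
    rintro S (⟨b, hb, rfl⟩ | ⟨T, ⟨hTf, hTB⟩, rfl⟩)
    · exact hhit b (isOpen_of_mem_relCompactBasis hb)
    · exact hmiss _ ((isCompact_closure_sUnion_of_subset_relCompactBasis hTf hTB).inter_right
        (isClosed_strip L u)) inter_subset_right
  rwa [← borel_eq_generateFrom_of_subbasis (fellTop_eq_generateFrom_fellSubbasis u)] at hgen

lemma measurableSet_hit_inter_of_iInter_closure_subset (u : ℝ) {W C : Set (ℝ × L)}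
    (hW : IsOpen W) {O : ℕ → Set (ℝ × L)} (hO : ∀ n, IsOpen (O n)) (hOanti : Antitone O)
    (hCO : ∀ n, C ⊆ O n) (hOC : ⋂ n, closure (O n) ⊆ C) :
    MeasurableSet {Z : Cl L u | (Z.1 ∩ (W ∩ C)).Nonempty} := by
  have key : {Z : Cl L u | (Z.1 ∩ (W ∩ C)).Nonempty}
      = ⋃ b ∈ {b ∈ relCompactBasis (ℝ × L) | closure b ⊆ W},
          ⋂ n, {Z : Cl L u | (Z.1 ∩ ((b ∩ O n) ∩ strip L u)).Nonempty} := by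
    ext Z
    simp only [mem_ofPred_eq, mem_iUnion, mem_iInter, exists_prop]
    constructor
    · rintro ⟨x, hxZ, hxW, hxC⟩
      obtain ⟨b, hb, hxb, hbW⟩ := exists_mem_relCompactBasis_closure_subset hW hxW
      exact ⟨b, ⟨hb, hbW⟩, fun n => ⟨x, hxZ, ⟨hxb, hCO n hxC⟩, Z.2.2 hxZ⟩⟩
    · rintro ⟨b, ⟨hb, hbW⟩, hZb⟩
      -- Cantor's intersection theorem, in the compact set `closure b`
      let D : ℕ → Set (ℝ × L) := fun n => Z.1 ∩ closure b ∩ closure (O n)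
      have hD : (⋂ n, D n).Nonempty := by
        refine IsCompact.nonempty_iInter_of_sequence_nonempty_isCompact_isClosed D
          (fun n => inter_subset_inter_right _ (closure_mono (hOanti n.le_succ)))
          (fun n => ?_) ((hb.2.inter_left Z.2.1).inter_right isClosed_closure)
          (fun n => (Z.2.1.inter isClosed_closure).inter isClosed_closure)
        obtain ⟨x, hxZ, ⟨hxb, hxO⟩, -⟩ := hZb n
        exact ⟨x, ⟨hxZ, subset_closure hxb⟩, subset_closure hxO⟩
      obtain ⟨x, hx⟩ := hD
      rw [mem_iInter] at hx
      exact ⟨x, (hx 0).1.1, hbW (hx 0).1.2, hOC (mem_iInter.2 fun n => (hx n).2)⟩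
  rw [key]
  refine MeasurableSet.biUnion ((countable_relCompactBasis _).mono (sep_subset _ _))
    fun b hb => MeasurableSet.iInter fun n => ?_
  exact (isOpen_hit u ((isOpen_of_mem_relCompactBasis hb.1).inter (hO n))).measurableSet

lemma measurableSet_hit_inter_prod_univ (u : ℝ) {W : Set (ℝ × L)} (hW : IsOpen W) {T : Set ℝ}
    (hT : IsClosed T) : MeasurableSet {Z : Cl L u | (Z.1 ∩ (W ∩ T ×ˢ univ)).Nonempty} := by
  refine measurableSet_hit_inter_of_iInter_closure_subset u hW
    (O := fun n => Metric.thickening (1 / (n + 1)) T ×ˢ univ)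
    (fun n => Metric.isOpen_thickening.prod isOpen_univ)
    (fun m n hmn => prod_mono (Metric.thickening_mono (Nat.one_div_le_one_div hmn) T) le_rfl)
    (fun n => prod_mono (Metric.self_subset_thickening (by positivity) T) le_rfl) ?_
  intro x hx
  simp only [mem_iInter, closure_prod_eq, closure_univ, mem_prod] at hx
  refine ⟨?_, trivial⟩
  rw [← hT.closure_eq, Metric.closure_eq_iInter_cthickening, mem_iInter₂]
  intro δ hδ
  obtain ⟨n, hn⟩ := exists_nat_one_div_lt hδ
  exact Metric.cthickening_mono hn.le T (Metric.closure_thickening_subset_cthickening _ _ (hx n).1)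

lemma measurable_slice {a t u : ℝ} (ha : 0 ≤ a) (hau : a + t ≤ u) :
    Measurable (slice (L := L) a t (u := u)) := by
  refine measurable_of_measurableSet_preimage_hit_miss (fun U hU => ?_) fun K hK hKs => ?_
  · have hpre : slice a t ⁻¹' {F | (F.1 ∩ (U ∩ strip L t)).Nonempty}
        = {Z : Cl L u | (Z.1 ∩ ((fun p : ℝ × L => (p.1 - a, p.2)) ⁻¹' U
            ∩ Icc a (a + t) ×ˢ univ)).Nonempty} := by
      ext Z
      constructor
      · rintro ⟨p, ⟨hpZ, -⟩, hpU, ⟨hp0, hpt⟩, -⟩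
        exact ⟨(p.1 + a, p.2), hpZ, by simpa using hpU, ⟨by linarith, by linarith⟩, trivial⟩
      · rintro ⟨q, hqZ, hqU, ⟨hqa, hqt⟩, -⟩
        have hq : (q.1 - a, q.2) ∈ strip L t := ⟨⟨by linarith, by linarith⟩, trivial⟩
        exact ⟨(q.1 - a, q.2), ⟨by simpa using hqZ, hq⟩, hqU, hq⟩
    rw [hpre]
    exact measurableSet_hit_inter_prod_univ u (hU.preimage (by fun_prop)) isClosed_Icc
  · have hpre : slice a t ⁻¹' {F | F.1 ∩ K = ∅}
        = {Z : Cl L u | Z.1 ∩ (fun p : ℝ × L => (p.1 + a, p.2)) '' K = ∅} := by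
      ext Z
      simp only [mem_preimage, mem_ofPred_eq, slice, eq_empty_iff_forall_notMem]
      constructor
      · rintro h _ ⟨hZ, p, hpK, rfl⟩
        exact h p ⟨⟨hZ, hKs hpK⟩, hpK⟩
      · rintro h p ⟨⟨hZ, -⟩, hpK⟩
        exact h _ ⟨hZ, p, hpK, rfl⟩
    rw [hpre]
    refine (isOpen_miss u (hK.image (by fun_prop)) ?_).measurableSet
    rintro _ ⟨p, hpK, rfl⟩
    obtain ⟨⟨hp0, hpt⟩, -⟩ := hKs hpK
    exact ⟨⟨by linarith, by linarith⟩, trivial⟩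

lemma measurable_splitMap {s t : ℝ} (hs : 0 ≤ s) (ht : 0 ≤ t) :
    Measurable (splitMap (L := L) s t) :=
  (measurable_slice le_rfl (by linarith)).prodMk (measurable_slice hs le_rfl)

end FellBorel

/-- Corollary 3.6: let `μ` be a factorizing family over `[0,1] × L`
and `ν, ω` dominated families of probability measures factorizing exactly.  Then the
Hellinger affinity `H(t) = ∫ √((dν_t/dμ_t)(dω_t/dμ_t)) dμ_t` is multiplicative:
`H(s+t) = H(s)·H(t)`. -/
theorem hellinger_affinity_multiplicative
    [SecondCountableTopology L] [LocallyCompactSpace L] [T2Space L]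
    (μ ν ω : (t : ℝ) → Measure (Cl L t)) (hμ : IsFactorizing μ)
    (hνprob : ∀ t : ℝ, 0 < t → IsProbabilityMeasure (ν t))
    (hωprob : ∀ t : ℝ, 0 < t → IsProbabilityMeasure (ω t))
    (hνac : ∀ t : ℝ, 0 < t → ν t ≪ μ t)
    (hωac : ∀ t : ℝ, 0 < t → ω t ≪ μ t)
    (hνfact : ∀ s t : ℝ, 0 < s → 0 < t →
      ν (s + t) = Measure.map (concatMap s t) ((ν s).prod (ν t)))
    (hωfact : ∀ s t : ℝ, 0 < s → 0 < t →
      ω (s + t) = Measure.map (concatMap s t) ((ω s).prod (ω t))) :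
    ∀ s t : ℝ, 0 < s → 0 < t →
      (∫ Z, Real.sqrt ((((ν (s + t)).rnDeriv (μ (s + t))) Z).toReal *
          (((ω (s + t)).rnDeriv (μ (s + t))) Z).toReal) ∂(μ (s + t)))
      = (∫ Z, Real.sqrt ((((ν s).rnDeriv (μ s)) Z).toReal *
          (((ω s).rnDeriv (μ s)) Z).toReal) ∂(μ s)) *
        (∫ Z, Real.sqrt ((((ν t).rnDeriv (μ t)) Z).toReal *
          (((ω t).rnDeriv (μ t)) Z).toReal) ∂(μ t)) := by
  intro s t hs ht
  obtain ⟨hμprob, hμfact, hμnull⟩ := hμ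
  have hst : 0 < s + t := add_pos hs ht
  have := hμprob s hs; have := hμprob t ht; have := hμprob (s + t) hst
  have := hνprob s hs; have := hνprob t ht; have := hνprob (s + t) hst
  have := hωprob s hs; have := hωprob t ht; have := hωprob (s + t) hst
  have hμφ : μ (s + t) ≪ ((μ s).prod (μ t)).map (concatMap s t) := (hμfact s t hs ht).1
  have hφ : AEMeasurable (concatMap s t) ((μ s).prod (μ t)) :=
    AEMeasurable.of_map_ne_zero fun h =>
      IsProbabilityMeasure.ne_zero (μ (s + t)) (Measure.absolutelyContinuous_zero_iff.1 (h ▸ hμφ))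
  have hinv := ae_splitMap_concatMap hs.le ht.le (μ s) (μ t)
    (hμnull s hs s ⟨hs.le, le_rfl⟩) (hμnull t ht 0 ⟨le_rfl, ht.le⟩)
  have := Measure.isProbabilityMeasure_map hφ
  simp only [integral_sqrt_toReal_rnDeriv_mul]
  rw [← ENNReal.toReal_mul]
  congr 1
  calc hellingerAffinity (ν (s + t)) (ω (s + t)) (μ (s + t))
      = hellingerAffinity (ν (s + t)) (ω (s + t)) (((μ s).prod (μ t)).map (concatMap s t)) :=
        (hellingerAffinity_of_absolutelyContinuous (hνac _ hst) (hωac _ hst) hμφ).symm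
    _ = hellingerAffinity (((ν s).prod (ν t)).map (concatMap s t))
          (((ω s).prod (ω t)).map (concatMap s t)) (((μ s).prod (μ t)).map (concatMap s t)) := by
        rw [hνfact s t hs ht, hωfact s t hs ht]
    _ = hellingerAffinity ((ν s).prod (ν t)) ((ω s).prod (ω t)) ((μ s).prod (μ t)) :=
        hellingerAffinity_map_of_ae_leftInverse hφ (measurable_splitMap hs.le ht.le)
          ((hνac s hs).prod (hνac t ht)) ((hωac s hs).prod (hωac t ht)) hinv
    _ = _ := hellingerAffinity_prod (hνac s hs) (hωac s hs) (hνac t ht) (hωac t ht)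

end RandomSets
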